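/- Let p be a polynomial in four commuting variables X₀, X₁, X₂, X₃ over ℂ. Then p evaluates to zero at every point of the form (u, conj(u), v, conj(v)) with u, v ∈ ℂ satisfying |u|² + |v|² = 1 if and only if p lies in the ideal of ℂ[X₀,X₁,X₂,X₃] generated by the single polynomial X₀·X₁ + X₂·X₃ − 1. -/

import Mathlib

/-!
Writing `u = y₀ + i y₁`, `v = y₂ + i y₃` is an invertible linear change of variables of
`ℂ[X₀, X₁, X₂, X₃]` which turns `X₀X₁ + X₂X₃ - 1` into `y₀² + y₁² + y₂² + y₃² - 1` and the points
`(u, ū, v, v̄)` of `SU(2)` into the real unit sphere `S³`. So it suffices to show that a complex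
polynomial `q` vanishing on the real unit sphere is divisible by `∑ yᵢ² - 1`. As a polynomial in
`y₀` the latter is monic of degree 2, and the remainder of `q` is linear in `y₀`; for `y'` in the
open unit ball it vanishes at both `y₀ = ±√(1 - ‖y'‖²)`, hence its coefficients vanish on a
nonempty open subset of `ℝⁿ` and are therefore zero.
-/

open MvPolynomial

namespace MvPolynomial

section

variable {R : Type*} [CommRing R] [IsDomain R] [Algebra ℝ R]

theorem eq_zero_of_eval_eq_zero_on_isOpen {σ : Type*} [Fintype σ] {p : MvPolynomial σ R}
    {U : Set (σ → ℝ)} (hU : IsOpen U) (hne : U.Nonempty)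
    (h : ∀ y ∈ U, eval (algebraMap ℝ R ∘ y) p = 0) : p = 0 := by
  obtain ⟨y₀, hy₀⟩ := hne
  obtain ⟨ε, hε, hball⟩ := Metric.isOpen_iff.mp hU y₀ hy₀
  rw [ball_pi y₀ hε] at hball
  refine funext_set (fun i => algebraMap ℝ R '' Metric.ball (y₀ i) ε) (fun i => ?_) fun x hx => ?_
  · rw [Real.ball_eq_Ioo]
    exact (Set.Ioo_infinite (by linarith)).image (algebraMap ℝ R).injective.injOn
  · choose y hy hyx using fun i => hx i trivial
    rw [map_zero, ← _root_.funext hyx]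
    exact h y (hball fun i _ => hy i)

end

variable {R : Type*} [CommRing R]

variable (R) in
noncomputable def unitSpherePoly (n : ℕ) : MvPolynomial (Fin n) R := ∑ i, X i ^ 2 - 1

theorem finSuccEquiv_unitSpherePoly (n : ℕ) :
    finSuccEquiv R n (unitSpherePoly R (n + 1)) =
      Polynomial.X ^ 2 + Polynomial.C (unitSpherePoly R n) := by
  simp only [unitSpherePoly, Fin.sum_univ_succ, map_sub, map_add, map_pow, finSuccEquiv_X_zero,
    map_sum, finSuccEquiv_X_succ, map_one]
  ring

variable [Algebra ℝ R]

theorem eval_unitSpherePoly {n : ℕ} (y : Fin n → ℝ) :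
    eval (algebraMap ℝ R ∘ y) (unitSpherePoly R n) = algebraMap ℝ R (∑ i, y i ^ 2 - 1) := by
  simp [unitSpherePoly]

section

variable {n : ℕ} {q : MvPolynomial (Fin (n + 1)) R}
  (hq : ∀ y : Fin (n + 1) → ℝ, ∑ i, y i ^ 2 = 1 → eval (algebraMap ℝ R ∘ y) q = 0)
include hq

theorem eval_modByMonic_unitSpherePoly_eq_zero {y : Fin n → ℝ} {t : ℝ}
    (ht : t ^ 2 + ∑ i, y i ^ 2 = 1) :
    ((finSuccEquiv R n q %ₘ (Polynomial.X ^ 2 + Polynomial.C (unitSpherePoly R n))).map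
      (eval (algebraMap ℝ R ∘ y))).eval (algebraMap ℝ R t) = 0 := by
  set G := Polynomial.X ^ 2 + Polynomial.C (unitSpherePoly R n)
  have hq_root :
      ((finSuccEquiv R n q).map (eval (algebraMap ℝ R ∘ y))).eval (algebraMap ℝ R t) = 0 := by
    rw [← eval_eq_eval_mv_eval', ← Fin.comp_cons]
    exact hq _ (by simpa [Fin.sum_univ_succ] using ht)
  have hG_root : (G.map (eval (algebraMap ℝ R ∘ y))).eval (algebraMap ℝ R t) = 0 := by
    simp [G, eval_unitSpherePoly, ← map_pow, ← ht]
  have := congrArg (fun P => (P.map (eval (algebraMap ℝ R ∘ y))).eval (algebraMap ℝ R t))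
    (Polynomial.modByMonic_add_div (finSuccEquiv R n q) G)
  simpa only [Polynomial.map_add, Polynomial.map_mul, Polynomial.eval_add, Polynomial.eval_mul,
    hG_root, hq_root, zero_mul, add_zero] using this

variable [IsDomain R]

theorem map_modByMonic_unitSpherePoly_eq_zero {y : Fin n → ℝ} (hy : ∑ i, y i ^ 2 < 1) :
    (finSuccEquiv R n q %ₘ (Polynomial.X ^ 2 + Polynomial.C (unitSpherePoly R n))).map
      (eval (algebraMap ℝ R ∘ y)) = 0 := by
  classical
  set t := √(1 - ∑ i, y i ^ 2)
  have ht : t ^ 2 + ∑ i, y i ^ 2 = 1 := by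
    rw [Real.sq_sqrt (by linarith)]
    ring
  have ht_pos : 0 < t := Real.sqrt_pos.mpr (by linarith)
  have hG : (Polynomial.X ^ 2 + Polynomial.C (unitSpherePoly R n)).Monic :=
    Polynomial.monic_X_pow_add_C _ two_ne_zero
  apply Polynomial.eq_zero_of_natDegree_lt_card_of_eval_eq_zero' _
    {algebraMap ℝ R t, algebraMap ℝ R (-t)}
  · simp only [Finset.mem_insert, Finset.mem_singleton, forall_eq_or_imp, forall_eq]
    exact ⟨eval_modByMonic_unitSpherePoly_eq_zero hq ht,
      eval_modByMonic_unitSpherePoly_eq_zero hq (by rwa [neg_sq])⟩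
  · rw [Finset.card_pair ((algebraMap ℝ R).injective.ne (by linarith))]
    calc _ ≤ _ := Polynomial.natDegree_map_le
      _ < (Polynomial.X ^ 2 + Polynomial.C (unitSpherePoly R n)).natDegree :=
        Polynomial.natDegree_modByMonic_lt _ hG (Polynomial.X_pow_add_C_ne_one two_pos _)
      _ = 2 := Polynomial.natDegree_X_pow_add_C

theorem unitSpherePoly_succ_dvd : unitSpherePoly R (n + 1) ∣ q := by
  rw [← map_dvd_iff (finSuccEquiv R n), finSuccEquiv_unitSpherePoly,
    ← Polynomial.modByMonic_eq_zero_iff_dvd (Polynomial.monic_X_pow_add_C _ two_ne_zero)]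
  ext k : 1
  refine eq_zero_of_eval_eq_zero_on_isOpen (U := {y | ∑ i, y i ^ 2 < 1})
    (isOpen_lt (by fun_prop) continuous_const) ⟨0, by simp⟩ fun y hy => ?_
  rw [← Polynomial.coeff_map, map_modByMonic_unitSpherePoly_eq_zero hq hy, Polynomial.coeff_zero]

end

theorem unitSpherePoly_dvd_iff [IsDomain R] {n : ℕ} {q : MvPolynomial (Fin n) R} :
    unitSpherePoly R n ∣ q ↔
      ∀ y : Fin n → ℝ, ∑ i, y i ^ 2 = 1 → eval (algebraMap ℝ R ∘ y) q = 0 := by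
  refine ⟨fun ⟨r, hr⟩ y hy => by simp [hr, eval_unitSpherePoly, hy], fun hq => ?_⟩
  cases n with
  | zero => simp [unitSpherePoly]
  | succ n => exact unitSpherePoly_succ_dvd hq

end MvPolynomial

open Complex

noncomputable def complexCoords : Fin 4 → MvPolynomial (Fin 4) ℂ :=
  ![X 0 + I • X 1, X 0 - I • X 1, X 2 + I • X 3, X 2 - I • X 3]

noncomputable def realCoords : Fin 4 → MvPolynomial (Fin 4) ℂ :=
  ![(2⁻¹ : ℂ) • (X 0 + X 1), (I / 2) • (X 1 - X 0), (2⁻¹ : ℂ) • (X 2 + X 3), (I / 2) • (X 3 - X 2)]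

theorem aeval_complexCoords_realCoords (i : Fin 4) :
    aeval complexCoords (realCoords i) = X i := by
  fin_cases i <;>
    simp only [complexCoords, realCoords, Fin.zero_eta, Fin.mk_one, Fin.reduceFinMk,
      Matrix.cons_val_zero, Matrix.cons_val_one, Matrix.cons_val, map_add, map_sub, map_smul,
      aeval_X, smul_add] <;>
    match_scalars <;> grind [I_sq]

theorem aeval_realCoords_complexCoords (i : Fin 4) :
    aeval realCoords (complexCoords i) = X i := by
  fin_cases i <;>
    simp only [complexCoords, realCoords, Fin.zero_eta, Fin.mk_one, Fin.reduceFinMk,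
      Matrix.cons_val_zero, Matrix.cons_val_one, Matrix.cons_val, map_add, map_sub, map_smul,
      aeval_X, smul_add] <;>
    match_scalars <;> grind [I_sq]

noncomputable def toRealCoords : MvPolynomial (Fin 4) ℂ ≃ₐ[ℂ] MvPolynomial (Fin 4) ℂ :=
  AlgEquiv.ofAlgHom (aeval complexCoords) (aeval realCoords)
    (algHom_ext fun i => by
      simp only [AlgHom.comp_apply, aeval_X, aeval_complexCoords_realCoords, AlgHom.id_apply])
    (algHom_ext fun i => by
      simp only [AlgHom.comp_apply, aeval_X, aeval_realCoords_complexCoords, AlgHom.id_apply])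

theorem toRealCoords_apply (p : MvPolynomial (Fin 4) ℂ) :
    toRealCoords p = aeval complexCoords p :=
  rfl

theorem toRealCoords_quadric :
    toRealCoords (X 0 * X 1 + X 2 * X 3 - 1) = unitSpherePoly ℂ 4 := by
  have hI : (C I * C I : MvPolynomial (Fin 4) ℂ) = -1 := by rw [← C_mul, I_mul_I, C_neg, C_1]
  rw [toRealCoords_apply]
  simp only [unitSpherePoly, Fin.sum_univ_four, map_add, map_sub, map_mul, map_one, aeval_X,
    complexCoords, Matrix.cons_val_zero, Matrix.cons_val_one, Matrix.cons_val, smul_eq_C_mul]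
  linear_combination (-(X 1 ^ 2 + X 3 ^ 2)) * hI

theorem eval_toRealCoords (y : Fin 4 → ℝ) (p : MvPolynomial (Fin 4) ℂ) :
    eval (algebraMap ℝ ℂ ∘ y) (toRealCoords p) =
      eval ![⟨y 0, y 1⟩, starRingEnd ℂ ⟨y 0, y 1⟩, ⟨y 2, y 3⟩, starRingEnd ℂ ⟨y 2, y 3⟩] p := by
  rw [toRealCoords_apply, ← aeval_eq_eval, ← aeval_eq_eval, comp_aeval_apply]
  congr 2 with i
  fin_cases i <;> simp [complexCoords, Complex.ext_iff]

theorem forall_norm_sq_add_norm_sq_eq_one_iff {P : ℂ → ℂ → Prop} :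
    (∀ u v : ℂ, ‖u‖ ^ 2 + ‖v‖ ^ 2 = 1 → P u v) ↔
      ∀ y : Fin 4 → ℝ, ∑ i, y i ^ 2 = 1 → P ⟨y 0, y 1⟩ ⟨y 2, y 3⟩ := by
  simp only [Complex.sq_norm, Complex.normSq_apply, Fin.sum_univ_four]
  refine ⟨fun h y hy => h _ _ (by linear_combination hy), fun h u v huv => ?_⟩
  simpa using h ![u.re, u.im, v.re, v.im] (by simp only [Matrix.cons_val]; linear_combination huv)

theorem vanishes_on_su2_iff_mem_ideal (p : MvPolynomial (Fin 4) ℂ) :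
    (∀ u v : ℂ, ‖u‖ ^ 2 + ‖v‖ ^ 2 = 1 →
      MvPolynomial.eval ![u, starRingEnd ℂ u, v, starRingEnd ℂ v] p = 0) ↔
      p ∈ Ideal.span {(X 0 * X 1 + X 2 * X 3 - 1 : MvPolynomial (Fin 4) ℂ)} := by
  rw [Ideal.mem_span_singleton, ← map_dvd_iff toRealCoords, toRealCoords_quadric,
    unitSpherePoly_dvd_iff]
  simp_rw [eval_toRealCoords]
  exact forall_norm_sq_add_norm_sq_eq_one_iff
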